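/- arXiv:2004.05018 — 2 statements merged into one kernel-verified Lean document; each statement's English description precedes it below -/
import Mathlib

section
/- Let G be a graph whose vertex set is partitioned into k independent sets V_1,…,V_k, and let G' be a graph obtained from G by adding edges, where for each added edge there exists some i such that both endpoints of the edge lie in V_i. Then mimw(G') ≥ mimw(G)/k. -/
open SimpleGraph

/-- `M` is an induced matching in the bipartite graph `G[X,Y]`: every pair in `M` is an
edge of `G` with first endpoint in `X` and second endpoint in `Y`, the pairs are pairwise
vertex-disjoint, and no edge of `G` between `X` and `Y` joins vertices incident to
distinct pairs of `M`. -/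
def IsInducedCutMatching {V : Type*} (G : SimpleGraph V) (X Y : Set V)
    (M : Finset (V × V)) : Prop :=
  (∀ p ∈ M, p.1 ∈ X ∧ p.2 ∈ Y ∧ G.Adj p.1 p.2) ∧
  ∀ p ∈ M, ∀ q ∈ M, p ≠ q →
    p.1 ≠ q.1 ∧ p.2 ≠ q.2 ∧ p.1 ≠ q.2 ∧ p.2 ≠ q.1 ∧
    ¬ G.Adj p.1 q.2 ∧ ¬ G.Adj q.1 p.2

/-- `cutmim G X Y` is the maximum size of an induced matching in `G[X,Y]`. -/
noncomputable def cutmim {V : Type*} (G : SimpleGraph V) (X Y : Set V) : ℕ :=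
  sSup {n : ℕ | ∃ M : Finset (V × V), IsInducedCutMatching G X Y M ∧ M.card = n}

/-- A branch decomposition of a graph `G`: a finite tree `T` of maximum degree at most 3
together with a bijection `δ` from the vertices of `G` to the leaves of `T`. -/
structure BranchDecomp {V : Type*} (G : SimpleGraph V) where
  L : Type
  T : SimpleGraph L
  finite : Finite L
  connected : T.Connected
  acyclic : T.IsAcyclic
  subcubic : ∀ x : L, (T.neighborSet x).ncard ≤ 3
  δ : V → L
  δ_inj : Function.Injective δ
  δ_leaf : ∀ v : V, (T.neighborSet (δ v)).ncard = 1
  δ_surj : ∀ x : L, (T.neighborSet x).ncard = 1 → ∃ v : V, δ v = x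

/-- The side of the cut of `V(G)` induced by the tree edge `ab`: the set of vertices of
`G` mapped by `δ` into the component of `T - ab` containing `a`. -/
def BranchDecomp.side {V : Type*} {G : SimpleGraph V} (B : BranchDecomp G)
    (a b : B.L) : Set V :=
  {v : V | (B.T.deleteEdges {s(a, b)}).Reachable (B.δ v) a}

/-- The mim-width of a branch decomposition: the maximum over tree edges `ab` of
`cutmim G (A_e, V(G) \ A_e)`. -/
noncomputable def BranchDecomp.width {V : Type*} {G : SimpleGraph V}
    (B : BranchDecomp G) : ℕ :=
  sSup {n : ℕ | ∃ a b : B.L, B.T.Adj a b ∧ n = cutmim G (B.side a b) (B.side a b)ᶜ}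

/-- The mim-width of a graph: the minimum width over all branch decompositions
(by convention `0` if no branch decomposition exists, e.g. for graphs with fewer
than two vertices). -/
noncomputable def mimw {V : Type*} (G : SimpleGraph V) : ℕ :=
  sInf {n : ℕ | ∃ B : BranchDecomp G, B.width = n}

/-- `G` is `H`-free: no induced subgraph of `G` is isomorphic to `H`. -/
def HFree {V W : Type*} (G : SimpleGraph V) (H : SimpleGraph W) : Prop :=
  ¬ ∃ S : Set V, Nonempty ((G.induce S) ≃g H)

/-- The disjoint union of two graphs. -/
def sumGraph {α β : Type*} (G : SimpleGraph α) (H : SimpleGraph β) :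
    SimpleGraph (α ⊕ β) :=
  SimpleGraph.fromRel (fun a b =>
    (∃ x y, a = Sum.inl x ∧ b = Sum.inl y ∧ G.Adj x y) ∨
    (∃ x y, a = Sum.inr x ∧ b = Sum.inr y ∧ H.Adj x y))

/-- `tP₂`: the disjoint union of `t` single edges. -/
def tP2graph (t : ℕ) : SimpleGraph (Fin t × Fin 2) :=
  SimpleGraph.fromRel (fun a b => a.1 = b.1)

/-- `sP₁ + P₂`: `s` isolated vertices together with a single edge. -/
def sP1P2graph (s : ℕ) : SimpleGraph (Fin s ⊕ Fin 2) :=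
  SimpleGraph.fromRel (fun a b => ∃ i j : Fin 2, a = Sum.inr i ∧ b = Sum.inr j)

/-- `K_r ⊟ K_r`: two disjoint copies of `K_r` joined by a perfect matching. -/
def KboxK (r : ℕ) : SimpleGraph (Fin r ⊕ Fin r) :=
  SimpleGraph.fromRel (fun a b =>
    (∃ i j, a = Sum.inl i ∧ b = Sum.inl j) ∨
    (∃ i j, a = Sum.inr i ∧ b = Sum.inr j) ∨
    (∃ i, a = Sum.inl i ∧ b = Sum.inr i))

/-- `K_r ⊟ rP₁`: a clique `a_1, …, a_r`, an independent set `b_1, …, b_r`, and the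
matching edges `a_i b_i`. -/
def KboxI (r : ℕ) : SimpleGraph (Fin r ⊕ Fin r) :=
  SimpleGraph.fromRel (fun a b =>
    (∃ i j, a = Sum.inl i ∧ b = Sum.inl j) ∨
    (∃ i, a = Sum.inl i ∧ b = Sum.inr i))

/-- `K_r ⊟ P₁`: `K_r` plus a pendant vertex attached to exactly one vertex of `K_r`. -/
def KboxP1 (r : ℕ) : SimpleGraph (Fin r ⊕ Unit) :=
  SimpleGraph.fromRel (fun a b =>
    (∃ i j : Fin r, a = Sum.inl i ∧ b = Sum.inl j) ∨
    (∃ i : Fin r, i.val = 0 ∧ a = Sum.inl i ∧ b = Sum.inr ()))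

/-- The claw `K_{1,3}`: vertex `0` adjacent to the three leaves `1`, `2`, `3`. -/
def clawGraph : SimpleGraph (Fin 4) :=
  SimpleGraph.fromRel (fun a _ => a = 0)

/-- The diamond: `K_4` minus the edge `{2,3}`. -/
def diamondGraph : SimpleGraph (Fin 4) :=
  SimpleGraph.fromRel (fun a b => ¬(a = 2 ∧ b = 3) ∧ ¬(a = 3 ∧ b = 2))

/-- The bowtie `⋈`: two triangles `{0,1,2}` and `{0,3,4}` sharing the vertex `0`. -/
def bowtieGraph : SimpleGraph (Fin 5) :=
  SimpleGraph.fromRel (fun a b => a = 0 ∨ (a = 1 ∧ b = 2) ∨ (a = 3 ∧ b = 4))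

/-- `P₁ + 2P₂`: the isolated vertex `0` and the two disjoint edges `12` and `34`. -/
def P1plus2P2graph : SimpleGraph (Fin 5) :=
  SimpleGraph.fromRel (fun a b => (a = 1 ∧ b = 2) ∨ (a = 3 ∧ b = 4))

/-- The subdivided claw `S_{1,1,5}`: centre `0` with leaves `1`, `2` at distance one and
the path `0-3-4-5-6-7`. -/
def S115graph : SimpleGraph (Fin 8) :=
  SimpleGraph.fromRel (fun a b =>
    (a = 0 ∧ b = 1) ∨ (a = 0 ∧ b = 2) ∨ (a = 0 ∧ b = 3) ∨
    (a = 3 ∧ b = 4) ∨ (a = 4 ∧ b = 5) ∨ (a = 5 ∧ b = 6) ∨ (a = 6 ∧ b = 7))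

/-- The Ramsey number `R(a,b)`: the least `N` such that every graph on at least `N`
vertices contains a clique of size `a` or an independent set of size `b`. -/
noncomputable def ramsey (a b : ℕ) : ℕ :=
  sInf {N : ℕ | ∀ M : ℕ, N ≤ M → ∀ G : SimpleGraph (Fin M),
    (∃ s : Finset (Fin M), G.IsNClique a s) ∨ (∃ s : Finset (Fin M), Gᶜ.IsNClique b s)}

/-- The `h × 2r` grid with the vertical edges prescribed by the wall construction:
the vertical edge between rows `i` and `i+1` of column `j` (all `0`-indexed) is kept
exactly when `i ≡ j (mod 2)`. -/
def wallPre (h r : ℕ) : SimpleGraph (Fin h × Fin (2 * r)) :=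
  SimpleGraph.fromRel (fun a b =>
    (a.1 = b.1 ∧ (a.2 : ℕ) + 1 = (b.2 : ℕ)) ∨
    (a.2 = b.2 ∧ (a.1 : ℕ) + 1 = (b.1 : ℕ) ∧ (a.1 : ℕ) % 2 = (a.2 : ℕ) % 2))

/-- The elementary `(h × r)`-wall: delete from `wallPre h r` all vertices of degree 1. -/
def elementaryWall (h r : ℕ) :
    SimpleGraph {v : Fin h × Fin (2 * r) // ((wallPre h r).neighborSet v).ncard ≠ 1} :=
  (wallPre h r).induce {v | ((wallPre h r).neighborSet v).ncard ≠ 1}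

/-- The graph obtained from `W` by simultaneously performing a clique implant on every
vertex of degree `3`: a degree-3 vertex `v` is replaced by the triangle of vertices
`(v, some u)` for `u` a neighbour of `v`, and `(v, some u)` inherits the edge of `v`
towards `u`; vertices of degree `≠ 3` are kept as `(v, none)`. -/
def cliqueImplantAll {V : Type*} (W : SimpleGraph V) :
    SimpleGraph {p : V × Option V //
      (p.2 = none ∧ (W.neighborSet p.1).ncard ≠ 3) ∨
      (∃ u, p.2 = some u ∧ (W.neighborSet p.1).ncard = 3 ∧ W.Adj p.1 u)} :=
  SimpleGraph.fromRel (fun a b =>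
    (a.1.1 = b.1.1 ∧ a.1.2 ≠ b.1.2) ∨
    (W.Adj a.1.1 b.1.1 ∧ (a.1.2 = none ∨ a.1.2 = some b.1.1) ∧
      (b.1.2 = none ∨ b.1.2 = some a.1.1)))

/-- A net-wall: the graph obtained from the elementary `(n × n)`-wall by performing a
clique implant on every vertex of degree `3`. -/
def netWall (n : ℕ) := cliqueImplantAll (elementaryWall n n)

/-- The chordal bipartite graph `G'` of Brault-Baron, Capelli and Mengel, built from a
graph `G`: vertices `x_v` (`Sum.inl v`), `y_v` (`Sum.inr (Sum.inl v)`), and for every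
ordered adjacent pair `p = (u,v)` two vertices `q_p = (p,0)` and `t_p = (p,1)`;
`X` is complete to `Y`, and for each adjacent pair `(u,v)` there is a path
`x_u - q_{(u,v)} - t_{(u,v)} - y_v`. -/
def BCMgraph {V : Type*} (G : SimpleGraph V) :
    SimpleGraph (V ⊕ V ⊕ ({p : V × V // G.Adj p.1 p.2} × Fin 2)) :=
  SimpleGraph.fromRel (fun a b =>
    (∃ u w : V, a = Sum.inl u ∧ b = Sum.inr (Sum.inl w)) ∨
    (∃ p : {p : V × V // G.Adj p.1 p.2},
      a = Sum.inl p.1.1 ∧ b = Sum.inr (Sum.inr (p, 0))) ∨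
    (∃ p : {p : V × V // G.Adj p.1 p.2},
      a = Sum.inr (Sum.inr (p, 0)) ∧ b = Sum.inr (Sum.inr (p, 1))) ∨
    (∃ p : {p : V × V // G.Adj p.1 p.2},
      a = Sum.inr (Sum.inr (p, 1)) ∧ b = Sum.inr (Sum.inl p.1.2)))

section Aux

variable {V : Type*} [Finite V]

lemma matching_card_le {G : SimpleGraph V} {X Y : Set V}
    {M : Finset (V × V)} (h : IsInducedCutMatching G X Y M) : M.card ≤ Nat.card V := by
  classical
  have := Fintype.ofFinite V
  rw [Nat.card_eq_fintype_card]
  have hinj : Set.InjOn Prod.fst (M : Set (V × V)) := by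
    intro p hp q hq hpq
    by_contra hne
    exact (h.2 p hp q hq hne).1 hpq
  calc M.card = (M.image Prod.fst).card := (Finset.card_image_of_injOn hinj).symm
    _ ≤ Fintype.card V := by simpa using Finset.card_le_univ _

lemma cutmim_bddAbove (G : SimpleGraph V) (X Y : Set V) :
    BddAbove {n : ℕ | ∃ M : Finset (V × V), IsInducedCutMatching G X Y M ∧ M.card = n} :=
  ⟨Nat.card V, by rintro n ⟨M, hM, rfl⟩; exact matching_card_le hM⟩

lemma cutmim_nonempty (G : SimpleGraph V) (X Y : Set V) :
    {n : ℕ | ∃ M : Finset (V × V), IsInducedCutMatching G X Y M ∧ M.card = n}.Nonempty := by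
  refine ⟨0, ∅, ⟨?_, ?_⟩, Finset.card_empty⟩
  · intro p hp; exact absurd hp (Finset.notMem_empty p)
  · intro p hp; exact absurd hp (Finset.notMem_empty p)

lemma cutmim_le_card (G : SimpleGraph V) (X Y : Set V) : cutmim G X Y ≤ Nat.card V :=
  csSup_le' (by rintro n ⟨M, hM, rfl⟩; exact matching_card_le hM)

lemma le_cutmim {G : SimpleGraph V} {X Y : Set V} {M : Finset (V × V)}
    (hM : IsInducedCutMatching G X Y M) : M.card ≤ cutmim G X Y :=
  le_csSup (cutmim_bddAbove G X Y) ⟨M, hM, rfl⟩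

lemma cutmim_key {k : ℕ} {G G' : SimpleGraph V} {P : Fin k → Set V}
    (hPart : ∀ v : V, ∃! i : Fin k, v ∈ P i)
    (hInd : ∀ i : Fin k, ∀ x ∈ P i, ∀ y ∈ P i, ¬ G.Adj x y)
    (hle : G ≤ G')
    (hNew : ∀ x y : V, G'.Adj x y → ¬ G.Adj x y → ∃ i : Fin k, x ∈ P i ∧ y ∈ P i)
    (X Y : Set V) : cutmim G X Y ≤ k * cutmim G' X Y := by
  classical
  obtain ⟨M, hM, hcard⟩ := Nat.sSup_mem (cutmim_nonempty G X Y) (cutmim_bddAbove G X Y)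
  rw [cutmim, ← hcard]
  set f : V × V → Fin k := fun p => (hPart p.1).choose with hf
  have hfmem : ∀ p : V × V, p.1 ∈ P (f p) := fun p => (hPart p.1).choose_spec.1
  have hfuniq : ∀ (p : V × V) (i : Fin k), p.1 ∈ P i → i = f p :=
    fun p i hi => (hPart p.1).choose_spec.2 i hi
  have hsum : M.card = ∑ i : Fin k, (M.filter fun p => f p = i).card :=
    Finset.card_eq_sum_card_fiberwise (fun x _ => Finset.mem_univ (f x))
  rw [hsum]
  have hbound : ∀ i : Fin k, (M.filter fun p => f p = i).card ≤ cutmim G' X Y := by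
    intro i
    apply le_cutmim (G := G')
    constructor
    · intro p hp
      obtain ⟨hpM, -⟩ := Finset.mem_filter.mp hp
      obtain ⟨h1, h2, h3⟩ := hM.1 p hpM
      exact ⟨h1, h2, hle h3⟩
    · intro p hp q hq hpq
      obtain ⟨hpM, hpi⟩ := Finset.mem_filter.mp hp
      obtain ⟨hqM, hqi⟩ := Finset.mem_filter.mp hq
      obtain ⟨d1, d2, d3, d4, n1, n2⟩ := hM.2 p hpM q hqM hpq
      refine ⟨d1, d2, d3, d4, ?_, ?_⟩
      · intro hadj
        obtain ⟨j, hpj, hqj⟩ := hNew _ _ hadj n1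
        have hj : j = f p := hfuniq p j hpj
        have hq2 : q.2 ∈ P i := by rw [hj, hpi] at hqj; exact hqj
        have hq1 : q.1 ∈ P i := by rw [← hqi]; exact hfmem q
        exact hInd i q.1 hq1 q.2 hq2 (hM.1 q hqM).2.2
      · intro hadj
        obtain ⟨j, hqj, hpj⟩ := hNew _ _ hadj n2
        have hj : j = f q := hfuniq q j hqj
        have hp2 : p.2 ∈ P i := by rw [hj, hqi] at hpj; exact hpj
        have hp1 : p.1 ∈ P i := by rw [← hpi]; exact hfmem p
        exact hInd i p.1 hp1 p.2 hp2 (hM.1 p hpM).2.2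
  calc ∑ i : Fin k, (M.filter fun p => f p = i).card
      ≤ ∑ _i : Fin k, cutmim G' X Y := Finset.sum_le_sum fun i _ => hbound i
    _ = k * cutmim G' X Y := by simp [Finset.sum_const, mul_comm]

/-- Transport a branch decomposition between graphs on the same vertex set. -/
def BranchDecomp.transport {G G' : SimpleGraph V} (B : BranchDecomp G) : BranchDecomp G' :=
  { L := B.L, T := B.T, finite := B.finite, connected := B.connected,
    acyclic := B.acyclic, subcubic := B.subcubic, δ := B.δ, δ_inj := B.δ_inj,
    δ_leaf := B.δ_leaf, δ_surj := B.δ_surj }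

lemma transport_width_le {k : ℕ} {G G' : SimpleGraph V} {P : Fin k → Set V}
    (hPart : ∀ v : V, ∃! i : Fin k, v ∈ P i)
    (hInd : ∀ i : Fin k, ∀ x ∈ P i, ∀ y ∈ P i, ¬ G.Adj x y)
    (hle : G ≤ G')
    (hNew : ∀ x y : V, G'.Adj x y → ¬ G.Adj x y → ∃ i : Fin k, x ∈ P i ∧ y ∈ P i)
    (B' : BranchDecomp G') :
    (BranchDecomp.transport (G' := G) B').width ≤ k * B'.width := by
  apply csSup_le'
  rintro n ⟨a, b, hab, rfl⟩
  have hside : (BranchDecomp.transport (G' := G) B').side a b = B'.side a b := rfl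
  rw [hside]
  have h1 := cutmim_key hPart hInd hle hNew (B'.side a b) (B'.side a b)ᶜ
  have h2 : cutmim G' (B'.side a b) (B'.side a b)ᶜ ≤ B'.width := by
    refine le_csSup ⟨Nat.card V, ?_⟩ ⟨a, b, hab, rfl⟩
    rintro m ⟨x, y, hxy, rfl⟩; exact cutmim_le_card G' _ _
  exact h1.trans (Nat.mul_le_mul_left k h2)

end Aux

/-- If the vertex set of `G` is partitioned into `k` independent sets
`P 0, …, P (k-1)` and `G'` is obtained from `G` by adding edges each of which has both
endpoints in the same part, then `mimw(G') ≥ mimw(G) / k`. -/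
theorem kpartite_mimw {V : Type*} [Finite V] (k : ℕ) (G G' : SimpleGraph V)
    (P : Fin k → Set V)
    (hPart : ∀ v : V, ∃! i : Fin k, v ∈ P i)
    (hInd : ∀ i : Fin k, ∀ x ∈ P i, ∀ y ∈ P i, ¬ G.Adj x y)
    (hle : G ≤ G')
    (hNew : ∀ x y : V, G'.Adj x y → ¬ G.Adj x y → ∃ i : Fin k, x ∈ P i ∧ y ∈ P i) :
    (mimw G : ℝ) / k ≤ (mimw G' : ℝ) := by
  rcases Nat.eq_zero_or_pos k with hk | hk
  · subst hk
    simp only [Nat.cast_zero, div_zero]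
    positivity
  · have key : mimw G ≤ k * mimw G' := by
      by_cases hS : {n : ℕ | ∃ B : BranchDecomp G', B.width = n}.Nonempty
      · obtain ⟨B', hB'⟩ := Nat.sInf_mem hS
        have h1 : mimw G ≤ (BranchDecomp.transport (G' := G) B').width :=
          Nat.sInf_le ⟨BranchDecomp.transport B', rfl⟩
        have h2 := transport_width_le hPart hInd hle hNew B'
        rw [hB'] at h2
        exact h1.trans h2
      · have hempty : {n : ℕ | ∃ B : BranchDecomp G, B.width = n} = ∅ := by
          ext n
          simp only [Set.mem_setOf_eq, Set.mem_empty_iff_false, iff_false]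
          rintro ⟨B, -⟩
          exact hS ⟨(BranchDecomp.transport (G' := G') B).width,
            BranchDecomp.transport B, rfl⟩
        have : mimw G = 0 := by rw [mimw, hempty, Nat.sInf_empty]
        simp [this]
    rw [div_le_iff₀ (by positivity : (0 : ℝ) < (k : ℝ))]
    calc (mimw G : ℝ) ≤ ((k * mimw G' : ℕ) : ℝ) := by exact_mod_cast key
      _ = (mimw G' : ℝ) * k := by push_cast; ring
end

section
/- Let r ≥ 1 and s ≥ 0, and let G be a (K_r ⊟ K_r, sP_1 + P_2)-free graph. Then for every X ⊆ V(G), cutmim_G(X, V(G)∖X) < R(R(r, s+1), s+1). In particular, mimw(G) < R(R(r, s+1), s+1). -/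
open SimpleGraph

/-!
Let `a_i b_i` (`a_i ∈ X`, `b_i ∈ Xᶜ`) be the edges of an induced matching of `G[X, Xᶜ]` with at
least `R(R(r, s+1), s+1)` edges. By Ramsey's theorem either `s + 1` of the `a_i` are independent,
or `R(r, s+1)` of them form a clique; in the latter case, among the corresponding `b_i`, either
`s + 1` are independent or `r` form a clique. A clique of `a_i` together with a clique of the
matched `b_i` induces `K_r ⊟ K_r`. Independent `a_i`, `i ∈ I`, with `|I| = s + 1` induce
`sP₁ + P₂`: keep the edge `a_i b_i` for one `i ∈ I` and the other `a_j` as isolated vertices, which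
are non-adjacent to `b_i` because the matching is induced; symmetrically for the `b_i`. Hence
every cut has `cutmim` below the bound, and so does every branch decomposition.
-/

open Finset

namespace SimpleGraph

variable {α β : Type*} {G : SimpleGraph β} {H : SimpleGraph α}

theorem IsNClique.map_embedding {n : ℕ} {t : Finset α} (f : H ↪g G) (h : H.IsNClique n t) :
    G.IsNClique n (t.map f.toEmbedding) :=
  h.map.mono <| (map_le_iff_le_comap _ _ _).2 fun _ _ huv => f.map_adj_iff.2 huv

theorem exists_forall_isNClique_or_isNClique_compl (a b : ℕ) :
    ∃ N, ∀ {W : Type*} (H : SimpleGraph W) (S : Finset W), N ≤ #S →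
      (∃ t ⊆ S, H.IsNClique a t) ∨ ∃ t ⊆ S, Hᶜ.IsNClique b t := by
  induction a generalizing b with
  | zero => exact ⟨0, fun _ _ _ => .inl ⟨∅, empty_subset _, by simp⟩⟩
  | succ a iha =>
    induction b with
    | zero => exact ⟨0, fun _ _ _ => .inr ⟨∅, empty_subset _, by simp⟩⟩
    | succ b ihb =>
      obtain ⟨N₁, hN₁⟩ := iha (b + 1)
      obtain ⟨N₂, hN₂⟩ := ihb
      refine ⟨N₁ + N₂ + 1, fun {W} H S hS => ?_⟩
      classical
      obtain ⟨v, hv⟩ : S.Nonempty := card_pos.1 (by omega)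
      set S₁ := (S.erase v).filter (H.Adj v)
      set S₂ := (S.erase v).filter (Hᶜ.Adj v)
      have hS₁ : S₁ ⊆ S := (filter_subset _ _).trans (erase_subset _ _)
      have hS₂ : S₂ ⊆ S := (filter_subset _ _).trans (erase_subset _ _)
      have hsplit : #S₁ + #S₂ + 1 = #S := by
        have : S₂ = (S.erase v).filter (¬ H.Adj v ·) := filter_congr fun x hx => by
          simp [(ne_of_mem_erase hx).symm]
        rw [this, card_filter_add_card_filter_not, card_erase_add_one hv]
      by_cases h₁ : N₁ ≤ #S₁
      · obtain ⟨t, htS, ht⟩ | ⟨t, htS, ht⟩ := hN₁ H S₁ h₁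
        · exact .inl ⟨insert v t, insert_subset hv (htS.trans hS₁),
            ht.insert fun x hx => (mem_filter.1 (htS hx)).2⟩
        · exact .inr ⟨t, htS.trans hS₁, ht⟩
      · obtain ⟨t, htS, ht⟩ | ⟨t, htS, ht⟩ := hN₂ H S₂ (by omega)
        · exact .inl ⟨t, htS.trans hS₂, ht⟩
        · exact .inr ⟨insert v t, insert_subset hv (htS.trans hS₂),
            ht.insert fun x hx => (mem_filter.1 (htS hx)).2⟩

theorem isNClique_or_isNClique_compl_of_ramsey_le {a b : ℕ} (H : SimpleGraph α) (S : Finset α)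
    (hS : ramsey a b ≤ #S) : (∃ t ⊆ S, H.IsNClique a t) ∨ ∃ t ⊆ S, Hᶜ.IsNClique b t := by
  have hfin : ramsey a b ∈ {N | ∀ M, N ≤ M → ∀ H : SimpleGraph (Fin M),
      (∃ t, H.IsNClique a t) ∨ ∃ t, Hᶜ.IsNClique b t} := by
    refine Nat.sInf_mem ?_
    obtain ⟨N, hN⟩ := exists_forall_isNClique_or_isNClique_compl a b
    refine ⟨N, fun M hM H => ?_⟩
    obtain ⟨t, -, ht⟩ | ⟨t, -, ht⟩ := hN H univ (by simpa using hM)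
    exacts [.inl ⟨t, ht⟩, .inr ⟨t, ht⟩]
  let e : Fin #S ↪ α := S.equivFin.symm.toEmbedding.trans (.subtype _)
  have he (t : Finset (Fin #S)) : t.map e ⊆ S := by
    simp [e, subset_iff]
  obtain ⟨t, ht⟩ | ⟨t, ht⟩ := hfin _ hS (H.comap e)
  · exact .inl ⟨_, he t, ht.map_embedding (Embedding.comap e H)⟩
  · exact .inr ⟨_, he t, ht.map_embedding (Embedding.complEquiv (Embedding.comap e H))⟩

theorem IsClique.adj_iff_ne {s : Set α} {x y : α} (h : H.IsClique s) (hx : x ∈ s) (hy : y ∈ s) :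
    H.Adj x y ↔ x ≠ y :=
  ⟨Adj.ne, h hx hy⟩

end SimpleGraph

section InducedSubgraphs

variable {r s : ℕ} {i j : Fin r}

@[simp] theorem KboxK_adj_inl_inl : (KboxK r).Adj (.inl i) (.inl j) ↔ i ≠ j := by simp [KboxK]
@[simp] theorem KboxK_adj_inr_inr : (KboxK r).Adj (.inr i) (.inr j) ↔ i ≠ j := by simp [KboxK]
@[simp] theorem KboxK_adj_inl_inr : (KboxK r).Adj (.inl i) (.inr j) ↔ i = j := by
  simp [KboxK, eq_comm]
@[simp] theorem KboxK_adj_inr_inl : (KboxK r).Adj (.inr i) (.inl j) ↔ i = j := by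
  simp [KboxK, eq_comm]

@[simp] theorem sP1P2graph_not_adj_inl (k : Fin s) (x : Fin s ⊕ Fin 2) :
    ¬ (sP1P2graph s).Adj (.inl k) x := by simp [sP1P2graph]
@[simp] theorem sP1P2graph_adj_inr_inr {i j : Fin 2} :
    (sP1P2graph s).Adj (.inr i) (.inr j) ↔ i ≠ j := by
  fin_cases i <;> fin_cases j <;> simp [sP1P2graph]

variable {V : Type*} {G : SimpleGraph V}

theorem HFree.not_isIndContained {W : Type*} {H : SimpleGraph W} (h : HFree G H) :
    ¬ H ⊴ G := fun hHG =>
  let ⟨S, ⟨e⟩⟩ := isIndContained_iff_exists_iso_induce.1 hHG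
  h ⟨S, ⟨e.symm⟩⟩

theorem injective_of_adj_iff_ne {ι : Type*} {a : ι → V} (ha : ∀ i j, G.Adj (a i) (a j) ↔ i ≠ j) :
    a.Injective := fun i j hij => by
  by_contra hne
  exact G.irrefl (hij ▸ (ha i j).2 hne)

theorem KboxK_isIndContained_of {a b : Fin r → V} (ha : ∀ i j, G.Adj (a i) (a j) ↔ i ≠ j)
    (hb : ∀ i j, G.Adj (b i) (b j) ↔ i ≠ j) (hab : ∀ i j, G.Adj (a i) (b j) ↔ i = j)
    (hne : ∀ i j, a i ≠ b j) : KboxK r ⊴ G := by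
  refine ⟨⟨⟨Sum.elim a b,
    (injective_of_adj_iff_ne ha).sumElim (injective_of_adj_iff_ne hb) hne⟩, ?_⟩⟩
  rintro (i | i) (j | j) <;> simp [ha, hb, hab, G.adj_comm (b _), eq_comm]

theorem sP1P2graph_isIndContained_of {c d : V} {I : Finset V} (hcd : G.Adj c d)
    (hI : Gᶜ.IsNClique s I) (hc : ∀ x ∈ I, Gᶜ.Adj x c) (hd : ∀ x ∈ I, Gᶜ.Adj x d) :
    sP1P2graph s ⊴ G := by
  set w : Fin s → V := fun k => (I.equivFinOfCardEq hI.card_eq).symm k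
  have hwI (k : Fin s) : w k ∈ I := ((I.equivFinOfCardEq hI.card_eq).symm k).2
  have hw : w.Injective := Subtype.val_injective.comp (Equiv.injective _)
  have hww (k l : Fin s) : ¬ G.Adj (w k) (w l) := fun hkl =>
    ((compl_adj ..).1 (hI.isClique (hwI k) (hwI l) hkl.ne)).2 hkl
  have hwc (k : Fin s) : w k ≠ c ∧ ¬ G.Adj (w k) c := (compl_adj ..).1 (hc _ (hwI k))
  have hwd (k : Fin s) : w k ≠ d ∧ ¬ G.Adj (w k) d := (compl_adj ..).1 (hd _ (hwI k))
  refine ⟨⟨⟨Sum.elim w ![c, d], hw.sumElim ?_ ?_⟩, ?_⟩⟩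
  · intro i j
    fin_cases i <;> fin_cases j <;> simp [hcd.ne, hcd.ne.symm]
  · intro k i
    fin_cases i <;> simp [(hwc k).1, (hwd k).1]
  · rintro (k | i) (l | j)
    · simpa using hww k l
    · fin_cases j <;> simp [(hwc k).2, (hwd k).2]
    · fin_cases i <;>
        simp [G.adj_comm _ (w l), (sP1P2graph s).adj_comm _ (.inl l), (hwc l).2, (hwd l).2]
    · fin_cases i <;> fin_cases j <;> simp [hcd, hcd.symm]

end InducedSubgraphs

section InducedMatching

variable {V ι : Type*} {G : SimpleGraph V} {r s : ℕ}

structure IsInducedMatchingOn (G : SimpleGraph V) (a b : ι → V) (S : Finset ι) : Prop where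
  adj_iff : ∀ ⦃i⦄, i ∈ S → ∀ ⦃j⦄, j ∈ S → (G.Adj (a i) (b j) ↔ i = j)
  ne : ∀ ⦃i⦄, i ∈ S → ∀ ⦃j⦄, j ∈ S → a i ≠ b j

namespace IsInducedMatchingOn

variable {a b : ι → V} {S T : Finset ι}

theorem symm (h : IsInducedMatchingOn G a b S) : IsInducedMatchingOn G b a S where
  adj_iff _ hi _ hj := by rw [G.adj_comm, h.adj_iff hj hi, eq_comm]
  ne _ hi _ hj := (h.ne hj hi).symm

theorem mono (h : IsInducedMatchingOn G a b S) (hTS : T ⊆ S) : IsInducedMatchingOn G a b T where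
  adj_iff _ hi _ hj := h.adj_iff (hTS hi) (hTS hj)
  ne _ hi _ hj := h.ne (hTS hi) (hTS hj)

theorem injOn (h : IsInducedMatchingOn G a b S) : Set.InjOn a S := fun _ hi _ hj hij =>
  (h.adj_iff hi hj).1 (hij ▸ (h.adj_iff hj hj).2 rfl)

theorem KboxK_isIndContained (h : IsInducedMatchingOn G a b T) (ha : (G.comap a).IsClique T)
    (hb : (G.comap b).IsNClique r T) : KboxK r ⊴ G := by
  let e := T.equivFinOfCardEq hb.card_eq
  set f : Fin r → ι := fun k => e.symm k
  have hfT (k : Fin r) : f k ∈ T := (e.symm k).2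
  have hf : f.Injective := Subtype.val_injective.comp e.symm.injective
  refine KboxK_isIndContained_of (a := a ∘ f) (b := b ∘ f) ?_ ?_ ?_ ?_ <;> intro i j
  · exact (ha.adj_iff_ne (hfT i) (hfT j)).trans hf.ne_iff
  · exact (hb.isClique.adj_iff_ne (hfT i) (hfT j)).trans hf.ne_iff
  · exact (h.adj_iff (hfT i) (hfT j)).trans hf.eq_iff
  · exact h.ne (hfT i) (hfT j)

theorem sP1P2graph_isIndContained (h : IsInducedMatchingOn G a b T)
    (ha : (G.comap a)ᶜ.IsNClique (s + 1) T) : sP1P2graph s ⊴ G := by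
  classical
  obtain ⟨p, hp⟩ : T.Nonempty := card_pos.1 (by rw [ha.card_eq]; omega)
  have hind : ∀ i ∈ T, ∀ j ∈ T, ¬ G.Adj (a i) (a j) := fun i hi j hj hij =>
    ((compl_adj ..).1 (ha.isClique hi hj fun h => G.irrefl (h ▸ hij))).2 hij
  refine sP1P2graph_isIndContained_of ((h.adj_iff hp hp).2 rfl) (I := (T.erase p).image a)
    ⟨?_, ?_⟩ ?_ ?_
  · simp only [coe_image, Set.Pairwise, Set.mem_image, mem_coe]
    rintro _ ⟨i, hi, rfl⟩ _ ⟨j, hj, rfl⟩ hij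
    exact (compl_adj ..).2 ⟨hij, hind i (mem_of_mem_erase hi) j (mem_of_mem_erase hj)⟩
  · rw [card_image_of_injOn (h.injOn.mono (coe_subset.2 (erase_subset _ _))),
      card_erase_of_mem hp, ha.card_eq, Nat.add_sub_cancel]
  · simp only [forall_mem_image, mem_erase]
    rintro i ⟨hip, hi⟩
    exact (compl_adj ..).2 ⟨h.injOn.ne hi hp hip, hind i hi p hp⟩
  · simp only [forall_mem_image, mem_erase]
    rintro i ⟨hip, hi⟩
    exact (compl_adj ..).2 ⟨h.ne hi hp, (h.adj_iff hi hp).not.2 hip⟩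

end IsInducedMatchingOn

theorem IsInducedCutMatching.isInducedMatchingOn {X Y : Set V} {M : Finset (V × V)}
    (hM : IsInducedCutMatching G X Y M) : IsInducedMatchingOn G Prod.fst Prod.snd M where
  adj_iff p hp q hq := ⟨fun hpq => by_contra fun hne => (hM.2 p hp q hq hne).2.2.2.2.1 hpq,
    fun hpq => hpq ▸ (hM.1 p hp).2.2⟩
  ne p hp q hq := by
    obtain rfl | hne := eq_or_ne p q
    · exact (hM.1 p hp).2.2.ne
    · exact (hM.2 p hp q hq hne).2.2.1

theorem IsInducedCutMatching.card_lt_ramsey {X Y : Set V} {M : Finset (V × V)}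
    (hM : IsInducedCutMatching G X Y M) (h1 : HFree G (KboxK r)) (h2 : HFree G (sP1P2graph s)) :
    #M < ramsey (ramsey r (s + 1)) (s + 1) := by
  by_contra! hcard
  have hM' := hM.isInducedMatchingOn
  obtain ⟨T, hTM, hT⟩ | ⟨U, hUM, hU⟩ :=
    isNClique_or_isNClique_compl_of_ramsey_le (G.comap Prod.fst) M hcard
  · obtain ⟨K, hKT, hK⟩ | ⟨U, hUT, hU⟩ :=
      isNClique_or_isNClique_compl_of_ramsey_le (G.comap Prod.snd) T hT.card_eq.ge
    · exact h1.not_isIndContained <|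
        (hM'.mono (hKT.trans hTM)).KboxK_isIndContained (hT.isClique.subset (coe_subset.2 hKT)) hK
    · exact h2.not_isIndContained <| (hM'.mono (hUT.trans hTM)).symm.sP1P2graph_isIndContained hU
  · exact h2.not_isIndContained <| (hM'.mono hUM).sP1P2graph_isIndContained hU

end InducedMatching

theorem Nat.sSup_lt_of_forall_lt {S : Set ℕ} {N : ℕ} (hN : 0 < N) (h : ∀ n ∈ S, n < N) :
    sSup S < N := by
  obtain rfl | hS := S.eq_empty_or_nonempty
  · simpa using hN
  · exact h _ (Nat.sSup_mem hS ⟨N, fun n hn => (h n hn).le⟩)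

section Width

variable {V : Type*} {G : SimpleGraph V} {N : ℕ}

theorem cutmim_lt_of_forall_card_lt {X Y : Set V}
    (h : ∀ M, IsInducedCutMatching G X Y M → #M < N) : cutmim G X Y < N := by
  have hempty : IsInducedCutMatching G X Y ∅ := ⟨by simp, by simp⟩
  exact Nat.sSup_lt_of_forall_lt (h ∅ hempty) (by rintro _ ⟨M, hM, rfl⟩; exact h M hM)

theorem mimw_lt_of_forall_cutmim_lt (h : ∀ X, cutmim G X Xᶜ < N) : mimw G < N := by
  have hN : 0 < N := (Nat.zero_le _).trans_lt (h ∅)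
  obtain hempty | ⟨_, B, rfl⟩ := {n | ∃ B : BranchDecomp G, B.width = n}.eq_empty_or_nonempty
  · simpa [mimw, hempty] using hN
  · have hB : B.width ∈ {n | ∃ B : BranchDecomp G, B.width = n} := ⟨B, rfl⟩
    refine (Nat.sInf_le hB).trans_lt (Nat.sSup_lt_of_forall_lt hN ?_)
    rintro _ ⟨a, b, -, rfl⟩
    exact h _

end Width

theorem KboxK_sP1P2_free_mimw_general {V : Type*} (r s : ℕ)
    (G : SimpleGraph V) (h1 : HFree G (KboxK r)) (h2 : HFree G (sP1P2graph s)) :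
    (∀ X : Set V, cutmim G X Xᶜ < ramsey (ramsey r (s + 1)) (s + 1)) ∧
      mimw G < ramsey (ramsey r (s + 1)) (s + 1) := by
  have hcut (X : Set V) : cutmim G X Xᶜ < ramsey (ramsey r (s + 1)) (s + 1) :=
    cutmim_lt_of_forall_card_lt fun _ hM => hM.card_lt_ramsey h1 h2
  exact ⟨hcut, mimw_lt_of_forall_cutmim_lt hcut⟩

/-- Let `r ≥ 1`, `s ≥ 0` and let `G` be a `(K_r ⊟ K_r, sP₁ + P₂)`-free
graph.  Then `cutmim_G(X, V(G) ∖ X) < R(R(r, s+1), s+1)` for every `X ⊆ V(G)`; in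
particular `mimw(G) < R(R(r, s+1), s+1)`. -/
theorem KboxK_sP1P2_free_mimw {V : Type*} [Finite V] (r s : ℕ) (hr : 1 ≤ r)
    (G : SimpleGraph V) (h1 : HFree G (KboxK r)) (h2 : HFree G (sP1P2graph s)) :
    (∀ X : Set V, cutmim G X Xᶜ < ramsey (ramsey r (s + 1)) (s + 1)) ∧
      mimw G < ramsey (ramsey r (s + 1)) (s + 1) :=
  KboxK_sP1P2_free_mimw_general r s G h1 h2
end
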